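/- arXiv:2512.04928 — 3 statements merged into one kernel-verified Lean document; each statement's English description precedes it below -/
import Mathlib

section
/- Let λ, μ be finite measures on ℝⁿ of equal mass with finite first moments, with λ absolutely continuous. Let T be an optimal transport map from λ to μ, and let σ be the transport density associated with λ, μ and T. For a Borel set A ⊆ ℝⁿ, let λ_A = λ restricted to A, μ_A = T # λ_A, and let σ_A be the transport density associated with λ_A, μ_A and T (which is also an optimal transport map from λ_A to μ_A). Then σ_A ≤ σ as measures. -/
open MeasureTheory Metric Set Filter
open scoped ENNReal NNReal RealInnerProductSpace

noncomputable section

/-- `ℝⁿ` as a Euclidean space. -/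
abbrev Euc (n : ℕ) := EuclideanSpace ℝ (Fin n)

variable {n : ℕ}

/-- The support of a measure: the set of points all of whose neighborhoods have
positive measure. -/
def msupp (μ : Measure (Euc n)) : Set (Euc n) := {x | ∀ U ∈ nhds x, μ U ≠ 0}

/-- `π` is a coupling of `lam` and `mu`. -/
def IsCoupling (π : Measure (Euc n × Euc n)) (lam mu : Measure (Euc n)) : Prop :=
  π.map Prod.fst = lam ∧ π.map Prod.snd = mu

/-- `W_p^p(lam, mu) = inf over couplings π of ∫ (1/p) |x - y|^p dπ`. -/
def WpPow (p : ℝ) (lam mu : Measure (Euc n)) : ℝ :=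
  (⨅ π ∈ {π : Measure (Euc n × Euc n) | IsCoupling π lam mu},
    ∫⁻ z, ENNReal.ofReal ((1 / p) * ‖z.1 - z.2‖ ^ p) ∂π).toReal

/-- The transport density `σ = ∫₀¹ |j_t| dt` associated with `λ` and the transport map
`T`, where `j_t = (T_t)_# ((T x - x) λ)` and `T_t = (1 - t) Id + t T`; concretely,
`σ(A) = ∫₀¹ ∫ 1_A(T_t x) |T x - x| dλ(x) dt`. -/
def transportDensity (lam : Measure (Euc n)) (T : Euc n → Euc n) : Measure (Euc n) :=
  Measure.map (fun q : ℝ × Euc n => (1 - q.1) • q.2 + q.1 • T q.2)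
    ((volume.restrict (Icc (0 : ℝ) 1)).prod
      (lam.withDensity fun x => ENNReal.ofReal ‖T x - x‖))

/-- `T` is an optimal transport map for `W₁(λ, μ)`: it pushes `λ` forward to `μ` and its
transport cost attains the infimum over couplings. -/
def IsOptimalMapW1 (lam mu : Measure (Euc n)) (T : Euc n → Euc n) : Prop :=
  Measurable T ∧ lam.map T = mu ∧ (∫ x, ‖T x - x‖ ∂lam) = WpPow 1 lam mu

/-- Monotonicity of the transport density under restriction of the
source measure: `σ_A ≤ σ`. -/
theorem transport_density_monotone_restriction
    (n : ℕ) (lam mu : Measure (Euc n))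
    [IsFiniteMeasure lam] [IsFiniteMeasure mu]
    (hmass : lam Set.univ = mu Set.univ)
    (hmom_lam : Integrable (fun x => ‖x‖) lam)
    (hmom_mu : Integrable (fun x => ‖x‖) mu)
    (hac : lam ≪ (volume : Measure (Euc n)))
    (T : Euc n → Euc n) (hT : IsOptimalMapW1 lam mu T)
    (A : Set (Euc n)) (hA : MeasurableSet A) :
    transportDensity (lam.restrict A) T ≤ transportDensity lam T := by
  unfold transportDensity
  have hmeas : Measurable (fun q : ℝ × Euc n => (1 - q.1) • q.2 + q.1 • T q.2) := by
    apply Measurable.add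
    · exact ((measurable_const.sub measurable_fst).smul measurable_snd)
    · exact measurable_fst.smul (hT.1.comp measurable_snd)
  refine Measure.map_mono ?_ hmeas
  rw [← restrict_withDensity hA]
  calc (volume.restrict (Icc (0 : ℝ) 1)).prod
        ((lam.withDensity fun x => ENNReal.ofReal ‖T x - x‖).restrict A)
      = (((volume.restrict (Icc (0 : ℝ) 1)).restrict Set.univ).prod
        ((lam.withDensity fun x => ENNReal.ofReal ‖T x - x‖).restrict A)) := by
        rw [Measure.restrict_univ]
    _ = ((volume.restrict (Icc (0 : ℝ) 1)).prod
        (lam.withDensity fun x => ENNReal.ofReal ‖T x - x‖)).restrict (Set.univ ×ˢ A) := by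
        rw [Measure.prod_restrict]
    _ ≤ _ := Measure.restrict_le_self
end
end

section
/- Let λ be an absolutely continuous probability measure on ℝⁿ and μ a probability measure with finite first moments such that λ and μ are mutually singular. Let σ be the transport density associated with W₁(λ, μ). Then supp λ ⊆ supp σ. -/
open MeasureTheory Metric Set Filter
open scoped ENNReal NNReal RealInnerProductSpace

noncomputable section

variable {n : ℕ}

/-- If `λ ⊥ μ` and `λ` is absolutely continuous, then
`supp λ ⊆ supp σ`, where `σ` is the transport density. -/
theorem support_subset_support_transport_density
    (n : ℕ) (lam mu : Measure (Euc n))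
    [IsProbabilityMeasure lam] [IsProbabilityMeasure mu]
    (hmom_lam : Integrable (fun x => ‖x‖) lam)
    (hmom_mu : Integrable (fun x => ‖x‖) mu)
    (hac : lam ≪ (volume : Measure (Euc n)))
    (hsing : lam.MutuallySingular mu)
    (T : Euc n → Euc n) (hT : IsOptimalMapW1 lam mu T) :
    msupp lam ⊆ msupp (transportDensity lam T) := by
  rcases hT with ⟨hTmeas, hTmap, -⟩
  intro x hx U hU
  -- a.e. `T y ≠ y`
  rcases hsing with ⟨S, hSmeas, hS1, hS2⟩
  have hTS : lam (T ⁻¹' Sᶜ) = 0 := by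
    rw [← Measure.map_apply hTmeas hSmeas.compl, hTmap]; exact hS2
  have hae : ∀ᵐ y ∂lam, T y ≠ y := by
    have h1 : ∀ᵐ y ∂lam, y ∉ S := by rw [ae_iff]; simpa using hS1
    have h2 : ∀ᵐ y ∂lam, T y ∉ Sᶜ := by rw [ae_iff]; simpa using (show lam {a | T a ∉ S} = 0 from hTS)
    filter_upwards [h1, h2] with y hy1 hy2 h
    simp only [mem_compl_iff, not_not] at hy2
    rw [h] at hy2; exact hy1 hy2
  have hgzero : lam {y | ‖T y - y‖ = 0} = 0 := by
    have : {y | ‖T y - y‖ = 0} = {y | ¬ T y ≠ y} := by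
      ext y; simp [sub_eq_zero]
    rw [this, ← ae_iff]; exact hae
  -- ball inside U
  rcases Metric.mem_nhds_iff.mp hU with ⟨r, hr, hball⟩
  have hB : lam (ball x (r / 2)) ≠ 0 :=
    hx (ball x (r / 2)) (ball_mem_nhds x (by linarith))
  -- measurable g
  have hgmeas : Measurable fun y => ‖T y - y‖ := (hTmeas.sub measurable_id).norm
  set A : ℕ → Set (Euc n) := fun k =>
    ball x (r / 2) ∩ {y | ((k : ℝ) + 1)⁻¹ ≤ ‖T y - y‖ ∧ ‖T y - y‖ ≤ (k : ℝ) + 1} with hA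
  have hAmeas : ∀ k, MeasurableSet (A k) := fun k =>
    measurableSet_ball.inter
      ((hgmeas measurableSet_Ici).inter (hgmeas measurableSet_Iic))
  have hcover : ball x (r / 2) ⊆ (⋃ k, A k) ∪ {y | ‖T y - y‖ = 0} := by
    intro y hy
    by_cases h : ‖T y - y‖ = 0
    · exact Or.inr h
    · left
      have hpos : 0 < ‖T y - y‖ := lt_of_le_of_ne (norm_nonneg _) (Ne.symm h)
      obtain ⟨k1, hk1⟩ := exists_nat_ge (‖T y - y‖)⁻¹
      obtain ⟨k2, hk2⟩ := exists_nat_ge (‖T y - y‖)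
      have hc1 : (0 : ℝ) ≤ (k1 : ℝ) := Nat.cast_nonneg k1
      have hc2 : (0 : ℝ) ≤ (k2 : ℝ) := Nat.cast_nonneg k2
      refine mem_iUnion.mpr ⟨k1 + k2, hy, ?_, ?_⟩
      · have h1 : (‖T y - y‖)⁻¹ ≤ ((k1 + k2 : ℕ) : ℝ) + 1 := by push_cast; linarith
        calc (((k1 + k2 : ℕ) : ℝ) + 1)⁻¹ ≤ ((‖T y - y‖)⁻¹)⁻¹ :=
              inv_anti₀ (inv_pos.mpr hpos) h1
        _ = ‖T y - y‖ := inv_inv _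
      · push_cast; linarith
  -- some A k has positive measure
  have hAk : ∃ k, lam (A k) ≠ 0 := by
    by_contra h
    push_neg at h
    apply hB
    have h1 : lam ((⋃ k, A k) ∪ {y | ‖T y - y‖ = 0}) = 0 := by
      refine measure_union_null ?_ hgzero
      exact measure_iUnion_null h
    exact le_antisymm (le_trans (measure_mono hcover) h1.le) zero_le
  obtain ⟨k, hk⟩ := hAk
  set M : ℝ := (k : ℝ) + 1 with hM
  have hMpos : 0 < M := by positivity
  set δ : ℝ := min 1 (r / (2 * M)) with hδ
  have hδpos : 0 < δ := lt_min one_pos (by positivity)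
  have hδ1 : δ ≤ 1 := min_le_left _ _
  -- the map is measurable
  have hFmeas : Measurable fun q : ℝ × Euc n => (1 - q.1) • q.2 + q.1 • T q.2 :=
    ((measurable_const.sub measurable_fst).smul measurable_snd).add
      (measurable_fst.smul (hTmeas.comp measurable_snd))
  -- containment in the preimage
  have hsub : Icc (0 : ℝ) δ ×ˢ A k ⊆
      (fun q : ℝ × Euc n => (1 - q.1) • q.2 + q.1 • T q.2) ⁻¹' U := by
    rintro ⟨t, y⟩ ⟨⟨ht0, htδ⟩, hyB, hyg1, hyg2⟩
    apply hball
    have key : (1 - t) • y + t • T y - x = (y - x) + t • (T y - y) := by module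
    have hnorm : ‖(1 - t) • y + t • T y - x‖ < r := by
      rw [key]
      calc ‖(y - x) + t • (T y - y)‖ ≤ ‖y - x‖ + ‖t • (T y - y)‖ := norm_add_le _ _
      _ = ‖y - x‖ + |t| * ‖T y - y‖ := by rw [norm_smul, Real.norm_eq_abs]
      _ = ‖y - x‖ + t * ‖T y - y‖ := by rw [abs_of_nonneg ht0]
      _ < r / 2 + t * ‖T y - y‖ := by
          have := mem_ball_iff_norm.mp hyB
          have h2 : 0 ≤ t * ‖T y - y‖ := mul_nonneg ht0 (norm_nonneg _)
          linarith
      _ ≤ r / 2 + δ * M := by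
          have h3 : t * ‖T y - y‖ ≤ δ * M :=
            mul_le_mul htδ hyg2 (norm_nonneg _) (le_of_lt hδpos)
          linarith
      _ ≤ r / 2 + r / 2 := by
          have : δ * M ≤ (r / (2 * M)) * M :=
            mul_le_mul_of_nonneg_right (min_le_right _ _) hMpos.le
          have h2 : (r / (2 * M)) * M = r / 2 := by field_simp
          linarith
      _ = r := by ring
    exact mem_ball_iff_norm.mpr hnorm
  -- estimate the transport density of U from below
  set ν := ((volume.restrict (Icc (0 : ℝ) 1)).prod
      (lam.withDensity fun y => ENNReal.ofReal ‖T y - y‖)) with hν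
  have hle1 : ν (Icc (0 : ℝ) δ ×ˢ A k) ≤ transportDensity lam T U := by
    calc ν (Icc (0 : ℝ) δ ×ˢ A k)
        ≤ ν ((fun q : ℝ × Euc n => (1 - q.1) • q.2 + q.1 • T q.2) ⁻¹' U) :=
          measure_mono hsub
      _ ≤ transportDensity lam T U := Measure.le_map_apply hFmeas.aemeasurable U
  have hprod : ν (Icc (0 : ℝ) δ ×ˢ A k) =
      volume.restrict (Icc (0 : ℝ) 1) (Icc (0 : ℝ) δ) *
        (lam.withDensity fun y => ENNReal.ofReal ‖T y - y‖) (A k) :=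
    Measure.prod_prod _ _
  have hvol : volume.restrict (Icc (0 : ℝ) 1) (Icc (0 : ℝ) δ) = ENNReal.ofReal δ := by
    rw [Measure.restrict_apply measurableSet_Icc]
    have : Icc (0 : ℝ) δ ∩ Icc (0 : ℝ) 1 = Icc (0 : ℝ) δ := by
      apply inter_eq_self_of_subset_left
      exact Icc_subset_Icc le_rfl hδ1
    rw [this, Real.volume_Icc]
    simp
  have hwd : ENNReal.ofReal M⁻¹ * lam (A k) ≤
      (lam.withDensity fun y => ENNReal.ofReal ‖T y - y‖) (A k) := by
    rw [withDensity_apply _ (hAmeas k)]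
    calc ENNReal.ofReal M⁻¹ * lam (A k) = ∫⁻ _ in A k, ENNReal.ofReal M⁻¹ ∂lam := by
          rw [setLIntegral_const]
      _ ≤ ∫⁻ y in A k, ENNReal.ofReal ‖T y - y‖ ∂lam := by
          apply setLIntegral_mono' (hAmeas k)
          intro y hy
          exact ENNReal.ofReal_le_ofReal hy.2.1
  have hlb : ENNReal.ofReal δ * (ENNReal.ofReal M⁻¹ * lam (A k)) ≤
      transportDensity lam T U := by
    refine le_trans ?_ hle1
    rw [hprod, hvol]
    exact mul_le_mul_right hwd _
  intro h0
  rw [h0] at hlb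
  have : ENNReal.ofReal δ * (ENNReal.ofReal M⁻¹ * lam (A k)) = 0 := le_antisymm hlb zero_le
  rcases mul_eq_zero.mp this with h | h
  · exact absurd h (by simp [ENNReal.ofReal_eq_zero, not_le, hδpos])
  · rcases mul_eq_zero.mp h with h | h
    · exact absurd h (by simp [ENNReal.ofReal_eq_zero, not_le, inv_pos, hMpos])
    · exact hk h
end
end

section
/- Let μ be a κ^{-1}-uniformly log-concave probability measure on ℝⁿ for some κ > 0, i.e. μ has density exp(−U) with U − |x|²/(2κ) convex. Let p_t(x) = (4πt)^{-n/2} exp(−|x|²/(4t)) be the heat kernel at time t > 0. Then the convolution p_t ∗ μ is (κ + 2t)^{-1}-uniformly log-concave, i.e. its density has the form exp(−Ũ) with Ũ − |x|²/(2(κ+2t)) convex. -/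
open MeasureTheory Metric Set Filter
open scoped ENNReal NNReal RealInnerProductSpace

noncomputable section

variable {n : ℕ}

/-- `g` is a log-concave function (written multiplicatively, so that zero values are
allowed; this says `g = exp(-V)` with `V : ℝⁿ → ℝ ∪ {+∞}` convex). -/
def LogConcaveFn (g : Euc n → ℝ) : Prop :=
  ∀ x y : Euc n, ∀ θ : ℝ, θ ∈ Icc (0 : ℝ) 1 →
    g x ^ θ * g y ^ (1 - θ) ≤ g (θ • x + (1 - θ) • y)

/-- `g = exp(-V)` with `V - c|·|²/2` convex (written multiplicatively, so that zero
values are allowed). For `c = κ` this says that `V` is `κ`-strongly convex; for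
`c = κ⁻¹` it says that `g` is `κ⁻¹`-uniformly log-concave. -/
def StronglyLogConcaveFn (c : ℝ) (g : Euc n → ℝ) : Prop :=
  ∀ x y : Euc n, ∀ θ : ℝ, θ ∈ Icc (0 : ℝ) 1 →
    g x ^ θ * g y ^ (1 - θ) * Real.exp (c * θ * (1 - θ) * ‖x - y‖ ^ 2 / 2)
      ≤ g (θ • x + (1 - θ) • y)

/-- The heat kernel `p_t(x) = (4πt)^{-n/2} exp(-|x|²/(4t))`. -/
def heatKernel (n : ℕ) (t : ℝ) (x : Euc n) : ℝ :=
  (4 * Real.pi * t) ^ (-(n : ℝ) / 2) * Real.exp (-‖x‖ ^ 2 / (4 * t))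

/-- The convolution `p_t ∗ μ` of the heat kernel with a measure, as a measure. -/
def heatConv (n : ℕ) (t : ℝ) (mu : Measure (Euc n)) : Measure (Euc n) :=
  volume.withDensity fun x => ENNReal.ofReal (∫ y, heatKernel n t (x - y) ∂mu)


section PLAux


lemma image_add_eq_preimage (c : ℝ) (T : Set ℝ) : (c + ·) '' T = ((-c) + ·) ⁻¹' T := by
  ext x
  constructor
  · rintro ⟨y, hy, rfl⟩; simpa using hy
  · intro h; exact ⟨-c + x, h, by ring⟩

lemma vol_image_add (c : ℝ) (T : Set ℝ) : volume ((c + ·) '' T) = volume T := by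
  rw [image_add_eq_preimage]; exact measure_preimage_add volume _ T

lemma bm1 {A B S : Set ℝ} (hA : MeasurableSet A) (hB : MeasurableSet B)
    (hAne : A.Nonempty) (hBne : B.Nonempty)
    (hsub : ∀ a ∈ A, ∀ b ∈ B, a + b ∈ S) :
    volume A + volume B ≤ volume S := by
  obtain ⟨a0, ha0⟩ := hAne
  obtain ⟨b0, hb0⟩ := hBne
  have h1 : volume A ≤ volume S := by
    have : A ⊆ (b0 + ·) ⁻¹' S := fun a ha => by
      simpa [add_comm] using hsub a ha b0 hb0
    calc volume A ≤ volume ((b0 + ·) ⁻¹' S) := measure_mono this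
    _ = volume S := measure_preimage_add volume _ S
  have h2 : volume B ≤ volume S := by
    have : B ⊆ (a0 + ·) ⁻¹' S := fun b hb => hsub a0 ha0 b hb
    calc volume B ≤ volume ((a0 + ·) ⁻¹' S) := measure_mono this
    _ = volume S := measure_preimage_add volume _ S
  rcases eq_or_ne (volume S) ∞ with hS | hS
  · simp [hS]
  have hAf : volume A ≠ ∞ := fun h => hS (top_le_iff.1 (h ▸ h1))
  have hBf : volume B ≠ ∞ := fun h => hS (top_le_iff.1 (h ▸ h2))
  apply ENNReal.le_of_forall_pos_le_add
  intro ε hε _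
  have hε2 : (ε : ℝ≥0∞) / 2 ≠ 0 := by
    simp [ENNReal.div_eq_top, hε.ne']
  obtain ⟨K, hKA, hKc, hKv⟩ := hA.exists_isCompact_lt_add hAf hε2
  obtain ⟨L, hLB, hLc, hLv⟩ := hB.exists_isCompact_lt_add hBf hε2
  set K' : Set ℝ := insert a0 K with hK'def
  set L' : Set ℝ := insert b0 L with hL'def
  have hK'c : IsCompact K' := hKc.insert a0
  have hL'c : IsCompact L' := hLc.insert b0
  have hK'A : K' ⊆ A := insert_subset ha0 hKA
  have hL'B : L' ⊆ B := insert_subset hb0 hLB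
  have hK'ne : K'.Nonempty := ⟨a0, mem_insert _ _⟩
  have hL'ne : L'.Nonempty := ⟨b0, mem_insert _ _⟩
  set u := sSup K' with hu
  set v := sInf L' with hv
  have hum : u ∈ K' := hK'c.sSup_mem hK'ne
  have hvm : v ∈ L' := hL'c.sInf_mem hL'ne
  set X := (v + ·) '' K' with hX
  set Y := (u + ·) '' L' with hY
  have hXS : X ⊆ S := by
    rintro x ⟨k, hk, rfl⟩
    simpa [add_comm] using hsub k (hK'A hk) v (hL'B hvm)
  have hYS : Y ⊆ S := by
    rintro x ⟨l, hl, rfl⟩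
    exact hsub u (hK'A hum) l (hL'B hl)
  have hXY : X ∩ Y ⊆ {v + u} := by
    rintro x ⟨⟨k, hk, rfl⟩, ⟨l, hl, hlx⟩⟩
    have hku : k ≤ u := le_csSup hK'c.bddAbove hk
    have hvl : v ≤ l := csInf_le hL'c.bddBelow hl
    have : v + k ≤ v + u := by linarith
    have : u + v ≤ u + l := by linarith
    simp only [mem_singleton_iff]
    have : v + k = u + l := hlx.symm
    have hk' : k = u := by linarith
    rw [hk']
  have hXm : MeasurableSet X := (hK'c.image (continuous_add_left v)).measurableSet
  have hYm : MeasurableSet Y := (hL'c.image (continuous_add_left u)).measurableSet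
  have hunion : volume X + volume Y ≤ volume S := by
    have : volume (X ∪ Y) + volume (X ∩ Y) = volume X + volume Y :=
      measure_union_add_inter X hYm
    have hXYv : volume (X ∩ Y) = 0 := by
      have h1 : volume (X ∩ Y) ≤ volume ({v + u} : Set ℝ) := measure_mono hXY
      simpa [Real.volume_singleton] using h1
    have hXUY : volume (X ∪ Y) ≤ volume S := measure_mono (union_subset hXS hYS)
    calc volume X + volume Y = volume (X ∪ Y) + volume (X ∩ Y) := this.symm
      _ = volume (X ∪ Y) := by rw [hXYv, add_zero]
      _ ≤ volume S := hXUY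
  have hXv : volume X = volume K' := vol_image_add _ _
  have hYv : volume Y = volume L' := vol_image_add _ _
  have hKK' : volume K ≤ volume K' := measure_mono (subset_insert _ _)
  have hLL' : volume L ≤ volume L' := measure_mono (subset_insert _ _)
  calc volume A + volume B ≤ (volume K + ε/2) + (volume L + ε/2) :=
        add_le_add hKv.le hLv.le
    _ ≤ (volume K' + ε/2) + (volume L' + ε/2) := by gcongr
    _ = (volume K' + volume L') + (ε/2 + ε/2) := by ring
    _ ≤ volume S + ε := by
        rw [ENNReal.add_halves]
        gcongr
        rw [← hXv, ← hYv]; exact hunion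


lemma ennreal_amgm {θ σ : ℝ} (hθ : 0 < θ) (hσ : 0 < σ) (hθσ : θ + σ = 1) (a b : ℝ≥0∞) :
    a ^ θ * b ^ σ ≤ ENNReal.ofReal θ * a + ENNReal.ofReal σ * b := by
  rcases eq_or_ne a ∞ with ha | ha
  · have : ENNReal.ofReal θ * a = ∞ := by
      rw [ha, ENNReal.mul_top]
      simp [ENNReal.ofReal_eq_zero, not_le.mpr hθ]
    simp [this]
  rcases eq_or_ne b ∞ with hb | hb
  · have : ENNReal.ofReal σ * b = ∞ := by
      rw [hb, ENNReal.mul_top]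
      simp [ENNReal.ofReal_eq_zero, not_le.mpr hσ]
    simp [this]
  lift a to ℝ≥0 using ha
  lift b to ℝ≥0 using hb
  rw [← ENNReal.coe_rpow_of_nonneg a hθ.le, ← ENNReal.coe_rpow_of_nonneg b hσ.le,
    ENNReal.ofReal, ENNReal.ofReal, ← ENNReal.coe_mul, ← ENNReal.coe_mul, ← ENNReal.coe_mul,
    ← ENNReal.coe_add, ENNReal.coe_le_coe]
  have hw : θ.toNNReal + σ.toNNReal = 1 := by
    ext
    simp [Real.toNNReal_of_nonneg hθ.le, Real.toNNReal_of_nonneg hσ.le, hθσ]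
  have := NNReal.geom_mean_le_arith_mean2_weighted θ.toNNReal σ.toNNReal a b hw
  simpa [Real.coe_toNNReal _ hθ.le, Real.coe_toNNReal _ hσ.le] using this

lemma pl_dim1_core {θ σ : ℝ} (hθ0 : 0 < θ) (hσ0 : 0 < σ) (hθσ : θ + σ = 1)
    (f g h : ℝ → ℝ≥0∞) (hf : Measurable f) (hg : Measurable g) (hh : Measurable h)
    (Mf Mg : ℝ≥0∞) (hMf0 : Mf ≠ 0) (hMft : Mf ≠ ∞) (hMg0 : Mg ≠ 0) (hMgt : Mg ≠ ∞)
    (hfM : ∀ x, f x ≤ Mf) (hgM : ∀ y, g y ≤ Mg)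
    (hfsup : ∀ s : ℝ≥0∞, s < Mf → ∃ x, s < f x)
    (hgsup : ∀ s : ℝ≥0∞, s < Mg → ∃ y, s < g y)
    (hyp : ∀ x y : ℝ, f x ^ θ * g y ^ σ ≤ h (θ * x + σ * y)) :
    (∫⁻ x, f x) ^ θ * (∫⁻ x, g x) ^ σ ≤ ∫⁻ x, h x := by
  set F := ∫⁻ x, f x with hF
  set G := ∫⁻ x, g x with hG
  rcases eq_or_ne F 0 with hF0 | hF0
  · rw [hF0, ENNReal.zero_rpow_of_pos hθ0, zero_mul]; exact zero_le
  rcases eq_or_ne G 0 with hG0 | hG0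
  · rw [hG0, ENNReal.zero_rpow_of_pos hσ0, mul_zero]; exact zero_le
  -- real versions
  set mf := Mf.toReal with hmf
  set mg := Mg.toReal with hmg
  have hmf0 : 0 < mf := ENNReal.toReal_pos hMf0 hMft
  have hmg0 : 0 < mg := ENNReal.toReal_pos hMg0 hMgt
  set m := mf ^ θ * mg ^ σ with hm
  have hm0 : 0 < m := mul_pos (Real.rpow_pos_of_pos hmf0 θ) (Real.rpow_pos_of_pos hmg0 σ)
  set M := ENNReal.ofReal m with hM
  have hMeq : M = Mf ^ θ * Mg ^ σ := by
    rw [hM, hm, ENNReal.ofReal_mul (Real.rpow_nonneg hmf0.le θ),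
      ← ENNReal.ofReal_rpow_of_pos hmf0, ← ENNReal.ofReal_rpow_of_pos hmg0,
      hmf, hmg, ENNReal.ofReal_toReal hMft, ENNReal.ofReal_toReal hMgt]
  have hM0 : M ≠ 0 := by simp [hM, hm0, ENNReal.ofReal_eq_zero, not_le]
  have hMt : M ≠ ∞ := ENNReal.ofReal_ne_top
  set h2 : ℝ → ℝ≥0∞ := fun w => min (h w) M with hh2def
  have hh2 : Measurable h2 := hh.min measurable_const
  have hh2M : ∀ w, h2 w ≤ M := fun w => min_le_right _ _
  have hbound : ∀ x y : ℝ, f x ^ θ * g y ^ σ ≤ M := by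
    intro x y
    rw [hMeq]
    exact mul_le_mul' (ENNReal.rpow_le_rpow (hfM x) hθ0.le) (ENNReal.rpow_le_rpow (hgM y) hσ0.le)
  have hyp2 : ∀ x y : ℝ, f x ^ θ * g y ^ σ ≤ h2 (θ * x + σ * y) := fun x y =>
    le_min (hyp x y) (hbound x y)
  -- real-valued functions
  set rf : ℝ → ℝ := fun x => (f x).toReal with hrf
  set rg : ℝ → ℝ := fun y => (g y).toReal with hrg
  set rh : ℝ → ℝ := fun w => (h2 w).toReal with hrh
  have hft : ∀ x, f x ≠ ∞ := fun x => ((hfM x).trans_lt (lt_top_iff_ne_top.2 hMft)).ne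
  have hgt : ∀ y, g y ≠ ∞ := fun y => ((hgM y).trans_lt (lt_top_iff_ne_top.2 hMgt)).ne
  have hh2t : ∀ w, h2 w ≠ ∞ := fun w => ((hh2M w).trans_lt (lt_top_iff_ne_top.2 hMt)).ne
  have hrfm : Measurable rf := ENNReal.measurable_toReal.comp hf
  have hrgm : Measurable rg := ENNReal.measurable_toReal.comp hg
  have hrhm : Measurable rh := ENNReal.measurable_toReal.comp hh2
  have hrfM : ∀ x, rf x ≤ mf := fun x => ENNReal.toReal_mono hMft (hfM x)
  have hrgM : ∀ y, rg y ≤ mg := fun y => ENNReal.toReal_mono hMgt (hgM y)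
  -- level set volumes
  set vA : ℝ → ℝ≥0∞ := fun t => volume {x | t < rf x} with hvA
  set vB : ℝ → ℝ≥0∞ := fun t => volume {y | t < rg y} with hvB
  set vH : ℝ → ℝ≥0∞ := fun t => volume {w | t < rh w} with hvH
  have hvAanti : Antitone vA := fun t t' htt' =>
    measure_mono (fun x hx => lt_of_le_of_lt htt' hx)
  have hvBanti : Antitone vB := fun t t' htt' =>
    measure_mono (fun x hx => lt_of_le_of_lt htt' hx)
  have hvHanti : Antitone vH := fun t t' htt' =>
    measure_mono (fun x hx => lt_of_le_of_lt htt' hx)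
  -- layer cake
  have layerF : F = ∫⁻ t in Ioi (0:ℝ), vA t := by
    rw [hF]
    have : ∀ x, f x = ENNReal.ofReal (rf x) := fun x =>
      (ENNReal.ofReal_toReal (hft x)).symm
    rw [lintegral_congr this]
    exact lintegral_eq_lintegral_meas_lt volume
      (Filter.Eventually.of_forall fun x => ENNReal.toReal_nonneg) hrfm.aemeasurable
  have layerG : G = ∫⁻ t in Ioi (0:ℝ), vB t := by
    rw [hG]
    have : ∀ y, g y = ENNReal.ofReal (rg y) := fun y =>
      (ENNReal.ofReal_toReal (hgt y)).symm
    rw [lintegral_congr this]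
    exact lintegral_eq_lintegral_meas_lt volume
      (Filter.Eventually.of_forall fun x => ENNReal.toReal_nonneg) hrgm.aemeasurable
  have layerH : (∫⁻ w, h2 w) = ∫⁻ t in Ioi (0:ℝ), vH t := by
    have : ∀ w, h2 w = ENNReal.ofReal (rh w) := fun w =>
      (ENNReal.ofReal_toReal (hh2t w)).symm
    rw [lintegral_congr this]
    exact lintegral_eq_lintegral_meas_lt volume
      (Filter.Eventually.of_forall fun x => ENNReal.toReal_nonneg) hrhm.aemeasurable
  -- the key level-set inequality
  have key : ∀ s : ℝ, 0 < s → s < 1 →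
      ENNReal.ofReal θ * vA (s * mf) + ENNReal.ofReal σ * vB (s * mg) ≤ vH (s * m) := by
    intro s hs0 hs1
    set A := {x | s * mf < rf x} with hA
    set B := {y | s * mg < rg y} with hB
    set S := {w | s * m < rh w} with hS
    have hAm : MeasurableSet A := measurableSet_lt measurable_const hrfm
    have hBm : MeasurableSet B := measurableSet_lt measurable_const hrgm
    have hSm : MeasurableSet S := measurableSet_lt measurable_const hrhm
    have hAne : A.Nonempty := by
      have h1 : ENNReal.ofReal (s * mf) < Mf := by
        rw [← ENNReal.ofReal_toReal hMft]
        exact ENNReal.ofReal_lt_ofReal_iff hmf0 |>.2 (by nlinarith)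
      obtain ⟨x, hx⟩ := hfsup _ h1
      exact ⟨x, (ENNReal.ofReal_lt_iff_lt_toReal (by positivity) (hft x)).1 hx⟩
    have hBne : B.Nonempty := by
      have h1 : ENNReal.ofReal (s * mg) < Mg := by
        rw [← ENNReal.ofReal_toReal hMgt]
        exact ENNReal.ofReal_lt_ofReal_iff hmg0 |>.2 (by nlinarith)
      obtain ⟨y, hy⟩ := hgsup _ h1
      exact ⟨y, (ENNReal.ofReal_lt_iff_lt_toReal (by positivity) (hgt y)).1 hy⟩
    set A' := (fun u => θ⁻¹ * u) ⁻¹' A with hA'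
    set B' := (fun u => σ⁻¹ * u) ⁻¹' B with hB'
    have hA'm : MeasurableSet A' := hAm.preimage (measurable_const_mul _)
    have hB'm : MeasurableSet B' := hBm.preimage (measurable_const_mul _)
    have hA'ne : A'.Nonempty := by
      obtain ⟨x, hx⟩ := hAne
      exact ⟨θ * x, by simp [hA', inv_mul_cancel_left₀ hθ0.ne', hx]⟩
    have hB'ne : B'.Nonempty := by
      obtain ⟨y, hy⟩ := hBne
      exact ⟨σ * y, by simp [hB', inv_mul_cancel_left₀ hσ0.ne', hy]⟩
    have hsub : ∀ a ∈ A', ∀ b ∈ B', a + b ∈ S := by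
      intro a ha b hb
      set x := θ⁻¹ * a with hx
      set y := σ⁻¹ * b with hy
      have hxA : s * mf < rf x := ha
      have hyB : s * mg < rg y := hb
      have hab : a + b = θ * x + σ * y := by
        rw [hx, hy]; field_simp
      have hfx : ENNReal.ofReal (s * mf) < f x :=
        (ENNReal.ofReal_lt_iff_lt_toReal (by positivity) (hft x)).2 hxA
      have hgy : ENNReal.ofReal (s * mg) < g y :=
        (ENNReal.ofReal_lt_iff_lt_toReal (by positivity) (hgt y)).2 hyB
      have hgy0 : g y ≠ 0 := fun hz => by simp [hz] at hgy
      -- ofReal (s*m) = ofReal(s*mf)^θ * ofReal(s*mg)^σ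
      have hreal : (s * mf) ^ θ * (s * mg) ^ σ = s * m := by
        rw [Real.mul_rpow hs0.le hmf0.le, Real.mul_rpow hs0.le hmg0.le, hm]
        rw [show s ^ θ * mf ^ θ * (s ^ σ * mg ^ σ) = (s ^ θ * s ^ σ) * (mf ^ θ * mg ^ σ) by ring]
        rw [← Real.rpow_add hs0, hθσ, Real.rpow_one]
      have heq : ENNReal.ofReal (s * m)
          = ENNReal.ofReal (s * mf) ^ θ * ENNReal.ofReal (s * mg) ^ σ := by
        rw [ENNReal.ofReal_rpow_of_pos (by positivity), ENNReal.ofReal_rpow_of_pos (by positivity),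
          ← ENNReal.ofReal_mul (by positivity), hreal]
      have hC0 : ENNReal.ofReal (s * mg) ^ σ ≠ 0 := by
        have : (0:ℝ≥0∞) < ENNReal.ofReal (s * mg) := by
          rw [ENNReal.ofReal_pos]; positivity
        exact (ENNReal.rpow_pos this ENNReal.ofReal_ne_top).ne'
      have hCt : ENNReal.ofReal (s * mg) ^ σ ≠ ∞ :=
        ENNReal.rpow_ne_top_of_nonneg hσ0.le ENNReal.ofReal_ne_top
      have hstrict : ENNReal.ofReal (s * m) < f x ^ θ * g y ^ σ := by
        rw [heq]
        calc ENNReal.ofReal (s * mf) ^ θ * ENNReal.ofReal (s * mg) ^ σ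
            < f x ^ θ * ENNReal.ofReal (s * mg) ^ σ := by
              exact ENNReal.mul_lt_mul_left hC0 hCt (ENNReal.rpow_lt_rpow hfx hθ0)
          _ ≤ f x ^ θ * g y ^ σ :=
              mul_le_mul_right (ENNReal.rpow_le_rpow hgy.le hσ0.le) _
      have hfin : ENNReal.ofReal (s * m) < h2 (a + b) := by
        rw [hab]; exact hstrict.trans_le (hyp2 x y)
      exact (ENNReal.ofReal_lt_iff_lt_toReal (by positivity) (hh2t (a + b))).1 hfin
    have hvol := bm1 hA'm hB'm hA'ne hB'ne hsub
    have hvolA : volume A' = ENNReal.ofReal θ * volume A := by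
      rw [hA', Real.volume_preimage_mul_left (inv_ne_zero hθ0.ne'), inv_inv,
        abs_of_pos hθ0]
    have hvolB : volume B' = ENNReal.ofReal σ * volume B := by
      rw [hB', Real.volume_preimage_mul_left (inv_ne_zero hσ0.ne'), inv_inv,
        abs_of_pos hσ0]
    rw [hvolA, hvolB] at hvol
    exact hvol
  -- substitution machinery
  have scale : ∀ (c : ℝ), 0 < c → ∀ (φ : ℝ → ℝ≥0∞), Measurable φ →
      (∫⁻ s, φ (c * s)) = ENNReal.ofReal c⁻¹ * ∫⁻ t, φ t := by
    intro c hc φ hφ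
    rw [← lintegral_map hφ (measurable_const_mul c), Real.map_volume_mul_left hc.ne',
      lintegral_smul_measure, abs_of_pos (inv_pos.2 hc), smul_eq_mul]
  have hvAmeas : Measurable vA := hvAanti.measurable
  have hvBmeas : Measurable vB := hvBanti.measurable
  have hvHmeas : Measurable vH := hvHanti.measurable
  -- pointwise indicator identity
  have ind_eq : ∀ (v : ℝ → ℝ≥0∞), 0 < (1:ℝ) → ∀ (c : ℝ), 0 < c → (∀ t, c ≤ t → v t = 0) →
      ∀ s : ℝ, (Ioi (0:ℝ)).indicator v (c * s) = (Ioo (0:ℝ) 1).indicator (fun u => v (u * c)) s := by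
    intro v _ c hc hvan s
    rcases le_or_gt s 0 with hs | hs
    · rw [indicator_of_notMem, indicator_of_notMem]
      · simp [hs, not_lt.2 hs]
      · simp only [mem_Ioi, not_lt]
        nlinarith
    rcases lt_or_ge s 1 with hs1 | hs1
    · rw [indicator_of_mem (by simp [mem_Ioi]; positivity),
        indicator_of_mem (by exact ⟨hs, hs1⟩)]
      rw [mul_comm]
    · rw [indicator_of_mem (by simp [mem_Ioi]; positivity),
        indicator_of_notMem (by simp [mem_Ioo, not_lt.2 hs1])]
      exact hvan _ (by nlinarith)
  have hvanA : ∀ t, mf ≤ t → vA t = 0 := by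
    intro t ht
    have : {x | t < rf x} = ∅ := by
      ext x; simp only [mem_setOf_eq, mem_empty_iff_false, iff_false, not_lt]
      exact (hrfM x).trans ht
    rw [hvA]; simp [this]
  have hvanB : ∀ t, mg ≤ t → vB t = 0 := by
    intro t ht
    have : {y | t < rg y} = ∅ := by
      ext y; simp only [mem_setOf_eq, mem_empty_iff_false, iff_false, not_lt]
      exact (hrgM y).trans ht
    rw [hvB]; simp [this]
  have hvanH : ∀ t, m ≤ t → vH t = 0 := by
    intro t ht
    have : {w | t < rh w} = ∅ := by
      ext w; simp only [mem_setOf_eq, mem_empty_iff_false, iff_false, not_lt]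
      have : rh w ≤ m := by
        have := ENNReal.toReal_mono hMt (hh2M w)
        simpa [hM, ENNReal.toReal_ofReal hm0.le] using this
      exact this.trans ht
    rw [hvH]; simp [this]
  -- the three scaled integrals
  set ψf := (Ioo (0:ℝ) 1).indicator (fun u => vA (u * mf)) with hψfdef
  set ψg := (Ioo (0:ℝ) 1).indicator (fun u => vB (u * mg)) with hψgdef
  set ψh := (Ioo (0:ℝ) 1).indicator (fun u => vH (u * m)) with hψhdef
  have hψfm : Measurable ψf :=
    (hvAmeas.comp (measurable_mul_const mf)).indicator measurableSet_Ioo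
  have hψgm : Measurable ψg :=
    (hvBmeas.comp (measurable_mul_const mg)).indicator measurableSet_Ioo
  have hFid : ENNReal.ofReal mf⁻¹ * F = ∫⁻ s, ψf s := by
    have e1 : F = ∫⁻ t, (Ioi (0:ℝ)).indicator vA t := by
      rw [layerF, lintegral_indicator measurableSet_Ioi]
    have e2 := scale mf hmf0 ((Ioi (0:ℝ)).indicator vA) (hvAmeas.indicator measurableSet_Ioi)
    rw [← e1] at e2
    rw [← e2]
    exact lintegral_congr (ind_eq vA one_pos mf hmf0 hvanA)
  have hGid : ENNReal.ofReal mg⁻¹ * G = ∫⁻ s, ψg s := by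
    have e1 : G = ∫⁻ t, (Ioi (0:ℝ)).indicator vB t := by
      rw [layerG, lintegral_indicator measurableSet_Ioi]
    have e2 := scale mg hmg0 ((Ioi (0:ℝ)).indicator vB) (hvBmeas.indicator measurableSet_Ioi)
    rw [← e1] at e2
    rw [← e2]
    exact lintegral_congr (ind_eq vB one_pos mg hmg0 hvanB)
  have hHid : ENNReal.ofReal m⁻¹ * ∫⁻ w, h2 w = ∫⁻ s, ψh s := by
    have e1 : (∫⁻ w, h2 w) = ∫⁻ t, (Ioi (0:ℝ)).indicator vH t := by
      rw [layerH, lintegral_indicator measurableSet_Ioi]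
    have e2 := scale m hm0 ((Ioi (0:ℝ)).indicator vH) (hvHmeas.indicator measurableSet_Ioi)
    rw [← e1] at e2
    rw [← e2]
    exact lintegral_congr (ind_eq vH one_pos m hm0 hvanH)
  -- integrate the key inequality
  have step : ENNReal.ofReal θ * (ENNReal.ofReal mf⁻¹ * F)
      + ENNReal.ofReal σ * (ENNReal.ofReal mg⁻¹ * G)
      ≤ ENNReal.ofReal m⁻¹ * ∫⁻ w, h2 w := by
    rw [hFid, hGid, hHid, ← lintegral_const_mul _ hψfm, ← lintegral_const_mul _ hψgm,
      ← lintegral_add_left (hψfm.const_mul _)]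
    apply lintegral_mono
    intro s
    rcases Classical.em (s ∈ Ioo (0:ℝ) 1) with hs | hs
    · simp only [hψfdef, hψgdef, hψhdef, indicator_of_mem hs]
      exact key s hs.1 hs.2
    · simp only [hψfdef, hψgdef, hψhdef, indicator_of_notMem hs]
      simp
  -- final algebra
  set cf := ENNReal.ofReal mf with hcf
  set cg := ENNReal.ofReal mg with hcg
  have hcf0 : cf ≠ 0 := by simp [hcf, ENNReal.ofReal_eq_zero, not_le, hmf0]
  have hcg0 : cg ≠ 0 := by simp [hcg, ENNReal.ofReal_eq_zero, not_le, hmg0]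
  have hcft : cf ≠ ∞ := ENNReal.ofReal_ne_top
  have hcgt : cg ≠ ∞ := ENNReal.ofReal_ne_top
  have hcfθ0 : cf ^ θ ≠ 0 := (ENNReal.rpow_pos (pos_iff_ne_zero.2 hcf0) hcft).ne'
  have hcgσ0 : cg ^ σ ≠ 0 := (ENNReal.rpow_pos (pos_iff_ne_zero.2 hcg0) hcgt).ne'
  have hcfθt : cf ^ θ ≠ ∞ := ENNReal.rpow_ne_top_of_nonneg hθ0.le hcft
  have hcgσt : cg ^ σ ≠ ∞ := ENNReal.rpow_ne_top_of_nonneg hσ0.le hcgt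
  have hMcc : ENNReal.ofReal m = cf ^ θ * cg ^ σ := by
    rw [hm, ENNReal.ofReal_mul (Real.rpow_nonneg hmf0.le θ),
      ← ENNReal.ofReal_rpow_of_pos hmf0, ← ENNReal.ofReal_rpow_of_pos hmg0]
  have hinvf : ENNReal.ofReal mf⁻¹ = cf⁻¹ := ENNReal.ofReal_inv_of_pos hmf0
  have hinvg : ENNReal.ofReal mg⁻¹ = cg⁻¹ := ENNReal.ofReal_inv_of_pos hmg0
  have expandF : (cf⁻¹ * F) ^ θ = (cf ^ θ)⁻¹ * F ^ θ := by
    rw [ENNReal.mul_rpow_of_ne_zero (ENNReal.inv_ne_zero.2 hcft) hF0, ENNReal.inv_rpow]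
  have expandG : (cg⁻¹ * G) ^ σ = (cg ^ σ)⁻¹ * G ^ σ := by
    rw [ENNReal.mul_rpow_of_ne_zero (ENNReal.inv_ne_zero.2 hcgt) hG0, ENNReal.inv_rpow]
  have halg : F ^ θ * G ^ σ
      = ENNReal.ofReal m * ((cf⁻¹ * F) ^ θ * ((cg⁻¹ * G) ^ σ)) := by
    rw [expandF, expandG, hMcc]
    rw [show cf ^ θ * cg ^ σ * ((cf ^ θ)⁻¹ * F ^ θ * ((cg ^ σ)⁻¹ * G ^ σ))
      = (cf ^ θ * (cf ^ θ)⁻¹) * ((cg ^ σ) * (cg ^ σ)⁻¹) * (F ^ θ * G ^ σ) by ring]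
    rw [ENNReal.mul_inv_cancel hcfθ0 hcfθt, ENNReal.mul_inv_cancel hcgσ0 hcgσt,
      one_mul, one_mul]
  have hmcancel : ENNReal.ofReal m * (ENNReal.ofReal m⁻¹ * ∫⁻ w, h2 w) = ∫⁻ w, h2 w := by
    rw [ENNReal.ofReal_inv_of_pos hm0, ← mul_assoc,
      ENNReal.mul_inv_cancel (by simp [ENNReal.ofReal_eq_zero, not_le, hm0]) ENNReal.ofReal_ne_top,
      one_mul]
  calc F ^ θ * G ^ σ = ENNReal.ofReal m * ((cf⁻¹ * F) ^ θ * ((cg⁻¹ * G) ^ σ)) := halg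
    _ ≤ ENNReal.ofReal m * (ENNReal.ofReal θ * (cf⁻¹ * F) + ENNReal.ofReal σ * (cg⁻¹ * G)) :=
        mul_le_mul_right (ennreal_amgm hθ0 hσ0 hθσ _ _) _
    _ ≤ ENNReal.ofReal m * (ENNReal.ofReal m⁻¹ * ∫⁻ w, h2 w) := by
        apply mul_le_mul_right
        rw [← hinvf, ← hinvg]
        exact step
    _ = ∫⁻ w, h2 w := hmcancel
    _ ≤ ∫⁻ w, h w := lintegral_mono fun w => min_le_left _ _

lemma trunc_sup (a : ℝ≥0∞) : (⨆ k : ℕ, min a ((k : ℝ≥0∞) + 1)) = a := by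
  apply le_antisymm (iSup_le fun k => min_le_left _ _)
  rcases eq_or_ne a ∞ with ha | ha
  · have : ∀ k : ℕ, min a ((k : ℝ≥0∞) + 1) = (k : ℝ≥0∞) + 1 := fun k => by
      rw [ha]; exact min_eq_right le_top
    simp only [this]
    rw [ha]
    have h1 : (⨆ k : ℕ, ((k : ℝ≥0∞))) ≤ ⨆ k : ℕ, ((k : ℝ≥0∞) + 1) :=
      iSup_mono fun k => le_self_add
    calc (⊤ : ℝ≥0∞) = ⨆ k : ℕ, (k : ℝ≥0∞) := ENNReal.iSup_natCast.symm
      _ ≤ _ := h1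
  · obtain ⟨k, hk⟩ := ENNReal.exists_nat_gt ha
    refine le_iSup_of_le k ?_
    rw [min_eq_left (hk.le.trans le_self_add)]

lemma pl_dim1 {θ σ : ℝ} (hθ0 : 0 < θ) (hσ0 : 0 < σ) (hθσ : θ + σ = 1)
    (f g h : ℝ → ℝ≥0∞) (hf : Measurable f) (hg : Measurable g) (hh : Measurable h)
    (hyp : ∀ x y : ℝ, f x ^ θ * g y ^ σ ≤ h (θ * x + σ * y)) :
    (∫⁻ x, f x) ^ θ * (∫⁻ x, g x) ^ σ ≤ ∫⁻ x, h x := by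
  rcases eq_or_ne (∫⁻ x, f x) 0 with hF0 | hF0
  · rw [hF0, ENNReal.zero_rpow_of_pos hθ0, zero_mul]; exact zero_le
  rcases eq_or_ne (∫⁻ x, g x) 0 with hG0 | hG0
  · rw [hG0, ENNReal.zero_rpow_of_pos hσ0, mul_zero]; exact zero_le
  obtain ⟨x0, hx0⟩ : ∃ x, f x ≠ 0 := by
    by_contra hc; push_neg at hc
    exact hF0 (by rw [show f = fun _ => 0 from funext hc]; simp)
  obtain ⟨y0, hy0⟩ : ∃ y, g y ≠ 0 := by
    by_contra hc; push_neg at hc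
    exact hG0 (by rw [show g = fun _ => 0 from funext hc]; simp)
  set fk : ℕ → ℝ → ℝ≥0∞ := fun k x => min (f x) ((k : ℝ≥0∞) + 1) with hfk
  set gk : ℕ → ℝ → ℝ≥0∞ := fun k y => min (g y) ((k : ℝ≥0∞) + 1) with hgk
  have hfkm : ∀ k, Measurable (fk k) := fun k => hf.min measurable_const
  have hgkm : ∀ k, Measurable (gk k) := fun k => hg.min measurable_const
  have hcore : ∀ k : ℕ, (∫⁻ x, fk k x) ^ θ * (∫⁻ y, gk k y) ^ σ ≤ ∫⁻ x, h x := by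
    intro k
    apply pl_dim1_core hθ0 hσ0 hθσ (fk k) (gk k) h (hfkm k) (hgkm k) hh
      (⨆ x, fk k x) (⨆ y, gk k y)
    · -- sup ≠ 0
      have hpos : 0 < fk k x0 :=
        lt_min (pos_iff_ne_zero.2 hx0) (lt_of_lt_of_le zero_lt_one le_add_self)
      exact (hpos.trans_le (le_iSup (fk k) x0)).ne'
    · refine (lt_of_le_of_lt (iSup_le fun x => min_le_right _ _) ?_).ne
      exact lt_top_iff_ne_top.2 (by simp)
    · have hpos : 0 < gk k y0 :=
        lt_min (pos_iff_ne_zero.2 hy0) (lt_of_lt_of_le zero_lt_one le_add_self)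
      exact (hpos.trans_le (le_iSup (gk k) y0)).ne'
    · refine (lt_of_le_of_lt (iSup_le fun y => min_le_right _ _) ?_).ne
      exact lt_top_iff_ne_top.2 (by simp)
    · exact fun x => le_iSup (fk k) x
    · exact fun y => le_iSup (gk k) y
    · exact fun s hs => lt_iSup_iff.1 hs
    · exact fun s hs => lt_iSup_iff.1 hs
    · intro x y
      calc fk k x ^ θ * gk k y ^ σ ≤ f x ^ θ * g y ^ σ :=
            mul_le_mul' (ENNReal.rpow_le_rpow (min_le_left _ _) hθ0.le)
              (ENNReal.rpow_le_rpow (min_le_left _ _) hσ0.le)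
        _ ≤ h (θ * x + σ * y) := hyp x y
  have hfmono : Monotone fun k => fk k := by
    intro k k' hkk' x
    exact min_le_min le_rfl (by gcongr)
  have hgmono : Monotone fun k => gk k := by
    intro k k' hkk' y
    exact min_le_min le_rfl (by gcongr)
  have hFsup : (⨆ k, ∫⁻ x, fk k x) = ∫⁻ x, f x := by
    rw [← lintegral_iSup hfkm hfmono]
    exact lintegral_congr fun x => trunc_sup (f x)
  have hGsup : (⨆ k, ∫⁻ y, gk k y) = ∫⁻ y, g y := by
    rw [← lintegral_iSup hgkm hgmono]
    exact lintegral_congr fun y => trunc_sup (g y)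
  have hamono : Monotone fun k => ∫⁻ x, fk k x := fun k k' hkk' =>
    lintegral_mono fun x => hfmono hkk' x
  have hbmono : Monotone fun k => ∫⁻ y, gk k y := fun k k' hkk' =>
    lintegral_mono fun y => hgmono hkk' y
  have ha : Tendsto (fun k => ∫⁻ x, fk k x) atTop (nhds (∫⁻ x, f x)) :=
    hFsup ▸ tendsto_atTop_iSup hamono
  have hb : Tendsto (fun k => ∫⁻ y, gk k y) atTop (nhds (∫⁻ y, g y)) :=
    hGsup ▸ tendsto_atTop_iSup hbmono
  have hFθ0 : (∫⁻ x, f x) ^ θ ≠ 0 := by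
    simp [ENNReal.rpow_eq_zero_iff, hF0, lt_asymm hθ0]
  have hGσ0 : (∫⁻ y, g y) ^ σ ≠ 0 := by
    simp [ENNReal.rpow_eq_zero_iff, hG0, lt_asymm hσ0]
  have hA : Tendsto (fun k => (∫⁻ x, fk k x) ^ θ) atTop (nhds ((∫⁻ x, f x) ^ θ)) :=
    (ENNReal.continuous_rpow_const.tendsto _).comp ha
  have hB : Tendsto (fun k => (∫⁻ y, gk k y) ^ σ) atTop (nhds ((∫⁻ y, g y) ^ σ)) :=
    (ENNReal.continuous_rpow_const.tendsto _).comp hb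
  have hAB := ENNReal.Tendsto.mul hA (Or.inl hFθ0) hB (Or.inl hGσ0)
  exact le_of_tendsto hAB (Eventually.of_forall hcore)

lemma pl_pi : ∀ (n : ℕ) {θ σ : ℝ}, 0 < θ → 0 < σ → θ + σ = 1 →
    ∀ (f g h : (Fin n → ℝ) → ℝ≥0∞), Measurable f → Measurable g → Measurable h →
    (∀ x y, f x ^ θ * g y ^ σ ≤ h (θ • x + σ • y)) →
    (∫⁻ x, f x) ^ θ * (∫⁻ x, g x) ^ σ ≤ ∫⁻ x, h x := by
  intro n
  induction n with
  | zero =>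
    intro θ σ hθ hσ hθσ f g h hfm hgm hhm hyp
    have e : ∀ (φ : (Fin 0 → ℝ) → ℝ≥0∞), (∫⁻ x, φ x) = φ default := by
      intro φ
      rw [show φ = fun _ => φ default from funext fun x => by
        rw [Subsingleton.elim x default], lintegral_const]
      simp [volume_pi, Measure.pi_univ]
    rw [e f, e g, e h]
    have := hyp default default
    rwa [Subsingleton.elim (θ • (default : Fin 0 → ℝ) + σ • default) default] at this
  | succ n ih =>
    intro θ σ hθ hσ hθσ f g h hfm hgm hhm hyp
    set e := MeasurableEquiv.piFinSuccAbove (fun _ : Fin (n+1) => ℝ) 0 with he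
    have hmp : MeasurePreserving e volume volume := by
      have := measurePreserving_piFinSuccAbove (fun _ : Fin (n+1) => (volume : Measure ℝ)) 0
      exact this
    set F : ℝ × (Fin n → ℝ) → ℝ≥0∞ := f ∘ e.symm with hF
    set G : ℝ × (Fin n → ℝ) → ℝ≥0∞ := g ∘ e.symm with hG
    set H : ℝ × (Fin n → ℝ) → ℝ≥0∞ := h ∘ e.symm with hH
    have hFm : Measurable F := hfm.comp e.symm.measurable
    have hGm : Measurable G := hgm.comp e.symm.measurable
    have hHm : Measurable H := hhm.comp e.symm.measurable
    have helin : ∀ (x y : Fin (n+1) → ℝ), e (θ • x + σ • y) = θ • e x + σ • e y :=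
      fun x y => rfl
    have hin : ∀ p q : ℝ × (Fin n → ℝ), F p ^ θ * G q ^ σ ≤ H (θ • p + σ • q) := by
      intro p q
      have key : θ • p + σ • q = e (θ • e.symm p + σ • e.symm q) := by
        rw [helin, e.apply_symm_apply, e.apply_symm_apply]
      rw [key]
      show f (e.symm p) ^ θ * g (e.symm q) ^ σ ≤ h (e.symm (e (θ • e.symm p + σ • e.symm q)))
      rw [e.symm_apply_apply]
      exact hyp _ _
    -- iterated integrals
    set φ : ℝ → ℝ≥0∞ := fun a => ∫⁻ u, F (a, u) with hφ
    set γ : ℝ → ℝ≥0∞ := fun b => ∫⁻ v, G (b, v) with hγ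
    set η : ℝ → ℝ≥0∞ := fun c => ∫⁻ w, H (c, w) with hη
    have hφm : Measurable φ := hFm.lintegral_prod_right'
    have hγm : Measurable γ := hGm.lintegral_prod_right'
    have hηm : Measurable η := hHm.lintegral_prod_right'
    have hyp1 : ∀ a b : ℝ, φ a ^ θ * γ b ^ σ ≤ η (θ * a + σ * b) := by
      intro a b
      apply ih hθ hσ hθσ (fun u => F (a, u)) (fun v => G (b, v)) (fun w => H (θ * a + σ * b, w))
        (hFm.comp measurable_prodMk_left) (hGm.comp measurable_prodMk_left)
        (hHm.comp measurable_prodMk_left)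
      intro u v
      have := hin (a, u) (b, v)
      simpa [Prod.smul_mk, Prod.mk_add_mk, smul_eq_mul] using this
    have h1d := pl_dim1 hθ hσ hθσ φ γ η hφm hγm hηm hyp1
    -- put together
    have hfe : ∫⁻ x, f x = ∫⁻ a, φ a := by
      have h1 : ∫⁻ x, f x = ∫⁻ p, F p := by
        rw [← hmp.lintegral_comp hFm]
        exact lintegral_congr fun x => by rw [hF]; simp [e.symm_apply_apply]
      rw [h1, Measure.volume_eq_prod, lintegral_prod _ hFm.aemeasurable]
    have hge : ∫⁻ x, g x = ∫⁻ b, γ b := by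
      have h1 : ∫⁻ x, g x = ∫⁻ p, G p := by
        rw [← hmp.lintegral_comp hGm]
        exact lintegral_congr fun x => by rw [hG]; simp [e.symm_apply_apply]
      rw [h1, Measure.volume_eq_prod, lintegral_prod _ hGm.aemeasurable]
    have hhe : ∫⁻ x, h x = ∫⁻ c, η c := by
      have h1 : ∫⁻ x, h x = ∫⁻ p, H p := by
        rw [← hmp.lintegral_comp hHm]
        exact lintegral_congr fun x => by rw [hH]; simp [e.symm_apply_apply]
      rw [h1, Measure.volume_eq_prod, lintegral_prod _ hHm.aemeasurable]
    rw [hfe, hge, hhe]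
    exact h1d

lemma pl_euc (n : ℕ) {θ σ : ℝ} (hθ : 0 < θ) (hσ : 0 < σ) (hθσ : θ + σ = 1)
    (f g h : EuclideanSpace ℝ (Fin n) → ℝ≥0∞)
    (hf : Measurable f) (hg : Measurable g) (hh : Measurable h)
    (hyp : ∀ x y, f x ^ θ * g y ^ σ ≤ h (θ • x + σ • y)) :
    (∫⁻ x, f x) ^ θ * (∫⁻ x, g x) ^ σ ≤ ∫⁻ x, h x := by
  set e := (MeasurableEquiv.toLp 2 (Fin n → ℝ)).symm with he
  have hmp : MeasurePreserving e volume volume :=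
    EuclideanSpace.volume_preserving_symm_measurableEquiv_toLp (Fin n)
  set F := f ∘ e.symm with hF
  set G := g ∘ e.symm with hG
  set H := h ∘ e.symm with hH
  have hFm : Measurable F := hf.comp e.symm.measurable
  have hGm : Measurable G := hg.comp e.symm.measurable
  have hHm : Measurable H := hh.comp e.symm.measurable
  have helin : ∀ (x y : EuclideanSpace ℝ (Fin n)), e (θ • x + σ • y) = θ • e x + σ • e y :=
    fun x y => rfl
  have hin : ∀ p q : Fin n → ℝ, F p ^ θ * G q ^ σ ≤ H (θ • p + σ • q) := by
    intro p q
    have key : θ • p + σ • q = e (θ • e.symm p + σ • e.symm q) := by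
      rw [helin, e.apply_symm_apply, e.apply_symm_apply]
    rw [key]
    show f (e.symm p) ^ θ * g (e.symm q) ^ σ ≤ h (e.symm (e (θ • e.symm p + σ • e.symm q)))
    rw [e.symm_apply_apply]
    exact hyp _ _
  have hpi := pl_pi n hθ hσ hθσ F G H hFm hGm hHm hin
  have hfe : ∫⁻ x, f x = ∫⁻ p, F p := by
    rw [← hmp.lintegral_comp hFm]
    exact lintegral_congr fun x => by rw [hF]; simp [e.symm_apply_apply]
  have hge : ∫⁻ x, g x = ∫⁻ p, G p := by
    rw [← hmp.lintegral_comp hGm]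
    exact lintegral_congr fun x => by rw [hG]; simp [e.symm_apply_apply]
  have hhe : ∫⁻ x, h x = ∫⁻ p, H p := by
    rw [← hmp.lintegral_comp hHm]
    exact lintegral_congr fun x => by rw [hH]; simp [e.symm_apply_apply]
  rw [hfe, hge, hhe]
  exact hpi


end PLAux

section GeomAux

variable {E : Type*} [NormedAddCommGroup E] [InnerProductSpace ℝ E]

lemma norm_combo (θ σ : ℝ) (hθσ : θ + σ = 1) (a b : E) :
    ‖θ • a + σ • b‖ ^ 2 = θ * ‖a‖ ^ 2 + σ * ‖b‖ ^ 2 - θ * σ * ‖a - b‖ ^ 2 := by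
  have e1 : ‖θ • a + σ • b‖ ^ 2
      = θ ^ 2 * ‖a‖ ^ 2 + 2 * (θ * σ * ⟪a, b⟫) + σ ^ 2 * ‖b‖ ^ 2 := by
    rw [norm_add_sq_real, norm_smul, norm_smul, real_inner_smul_left, real_inner_smul_right]
    rw [mul_pow, mul_pow, Real.norm_eq_abs, Real.norm_eq_abs, sq_abs, sq_abs]
    ring
  have e2 : ‖a - b‖ ^ 2 = ‖a‖ ^ 2 - 2 * ⟪a, b⟫ + ‖b‖ ^ 2 := norm_sub_sq_real a b
  have hσ : σ = 1 - θ := by linarith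
  subst hσ
  rw [e1, e2]; ring

lemma quad_ineq (t κ : ℝ) (ht : 0 < t) (hκ : 0 < κ) (d e : E) :
    ‖d‖ ^ 2 / (2 * (κ + 2 * t)) ≤ ‖d - e‖ ^ 2 / (4 * t) + ‖e‖ ^ 2 / (2 * κ) := by
  have hk2t : 0 < κ + 2 * t := by linarith
  have key : ‖d - e‖ ^ 2 / (4 * t) + ‖e‖ ^ 2 / (2 * κ) - ‖d‖ ^ 2 / (2 * (κ + 2 * t))
      = ((κ + 2 * t) / (4 * t * κ)) * ‖e - (κ / (κ + 2 * t)) • d‖ ^ 2 := by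
    have e2 : ‖d - e‖ ^ 2 = ‖d‖ ^ 2 - 2 * ⟪d, e⟫ + ‖e‖ ^ 2 := norm_sub_sq_real d e
    have e3 : ‖e - (κ / (κ + 2 * t)) • d‖ ^ 2
        = ‖e‖ ^ 2 - 2 * ((κ / (κ + 2 * t)) * ⟪e, d⟫) + (κ / (κ + 2 * t)) ^ 2 * ‖d‖ ^ 2 := by
      rw [norm_sub_sq_real, real_inner_smul_right, norm_smul]
      rw [mul_pow, Real.norm_eq_abs, sq_abs]
    rw [e2, e3, real_inner_comm e d]
    field_simp
    ring
  have h0 : 0 ≤ ((κ + 2 * t) / (4 * t * κ)) * ‖e - (κ / (κ + 2 * t)) • d‖ ^ 2 := by positivity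
  linarith [key]

end GeomAux

lemma heatKernel_pos {n : ℕ} {t : ℝ} (ht : 0 < t) (x : Euc n) : 0 < heatKernel n t x :=
  mul_pos (Real.rpow_pos_of_pos (by positivity) _) (Real.exp_pos _)

lemma heat_mul {n : ℕ} {t θ σ : ℝ} (ht : 0 < t) (hθσ : θ + σ = 1) (a b : Euc n) :
    heatKernel n t a ^ θ * heatKernel n t b ^ σ
      = heatKernel n t (θ • a + σ • b) * Real.exp (-(θ * σ * ‖a - b‖ ^ 2) / (4 * t)) := by
  unfold heatKernel
  set C := (4 * Real.pi * t) ^ (-(n : ℝ) / 2) with hC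
  have hC0 : 0 < C := Real.rpow_pos_of_pos (by positivity) _
  rw [Real.mul_rpow hC0.le (Real.exp_nonneg _), Real.mul_rpow hC0.le (Real.exp_nonneg _),
    ← Real.exp_mul, ← Real.exp_mul]
  rw [show C ^ θ * Real.exp (-‖a‖ ^ 2 / (4 * t) * θ) * (C ^ σ * Real.exp (-‖b‖ ^ 2 / (4 * t) * σ))
    = (C ^ θ * C ^ σ) * Real.exp (-‖a‖ ^ 2 / (4 * t) * θ + -‖b‖ ^ 2 / (4 * t) * σ) by
      rw [Real.exp_add]; ring]
  rw [← Real.rpow_add hC0, hθσ, Real.rpow_one, mul_assoc, ← Real.exp_add]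
  congr 2
  have hn := norm_combo θ σ hθσ a b
  linear_combination (1 / (4 * t)) * hn

lemma pointwise_key (n : ℕ) (t κ θ σ : ℝ) (ht : 0 < t) (hκ : 0 < κ)
    (hθ : 0 < θ) (hσ : 0 < σ) (hθσ : θ + σ = 1)
    (g : Euc n → ℝ) (hg_nonneg : ∀ x, 0 ≤ g x) (hconc : StronglyLogConcaveFn κ⁻¹ g)
    (x y u v : Euc n) :
    (heatKernel n t (x - u) * g u) ^ θ * (heatKernel n t (y - v) * g v) ^ σ
      ≤ Real.exp (-(θ * σ * ‖x - y‖ ^ 2 / (2 * (κ + 2 * t))))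
        * (heatKernel n t ((θ • x + σ • y) - (θ • u + σ • v)) * g (θ • u + σ • v)) := by
  set z := θ • x + σ • y with hz
  set w := θ • u + σ • v with hw
  have hcomb : θ • (x - u) + σ • (y - v) = z - w := by
    rw [hz, hw]; module
  have hdiff : (x - u) - (y - v) = (x - y) - (u - v) := by abel
  have hmain := heat_mul (n := n) ht hθσ (x - u) (y - v)
  rw [hcomb, hdiff] at hmain
  -- g part
  have gstep : g u ^ θ * g v ^ σ ≤ g w * Real.exp (-(κ⁻¹ * θ * σ * ‖u - v‖ ^ 2 / 2)) := by
    have h1 := hconc u v θ ⟨hθ.le, by linarith⟩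
    have hσeq : 1 - θ = σ := by linarith
    rw [hσeq] at h1
    have hE : (0:ℝ) < Real.exp (κ⁻¹ * θ * σ * ‖u - v‖ ^ 2 / 2) := Real.exp_pos _
    rw [Real.exp_neg]
    calc g u ^ θ * g v ^ σ = g u ^ θ * g v ^ σ * Real.exp (κ⁻¹ * θ * σ * ‖u - v‖ ^ 2 / 2)
          * (Real.exp (κ⁻¹ * θ * σ * ‖u - v‖ ^ 2 / 2))⁻¹ := by
          field_simp
      _ ≤ g w * (Real.exp (κ⁻¹ * θ * σ * ‖u - v‖ ^ 2 / 2))⁻¹ := by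
          apply mul_le_mul_of_nonneg_right _ (by positivity)
          exact h1
      _ = g w * (Real.exp (κ⁻¹ * θ * σ * ‖u - v‖ ^ 2 / 2))⁻¹ := rfl
  calc (heatKernel n t (x - u) * g u) ^ θ * (heatKernel n t (y - v) * g v) ^ σ
      = (heatKernel n t (x - u) ^ θ * heatKernel n t (y - v) ^ σ) * (g u ^ θ * g v ^ σ) := by
        rw [Real.mul_rpow (heatKernel_pos ht _).le (hg_nonneg u),
          Real.mul_rpow (heatKernel_pos ht _).le (hg_nonneg v)]
        ring
    _ = heatKernel n t (z - w) * Real.exp (-(θ * σ * ‖(x - y) - (u - v)‖ ^ 2) / (4 * t))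
          * (g u ^ θ * g v ^ σ) := by rw [hmain]
    _ ≤ heatKernel n t (z - w) * Real.exp (-(θ * σ * ‖(x - y) - (u - v)‖ ^ 2) / (4 * t))
          * (g w * Real.exp (-(κ⁻¹ * θ * σ * ‖u - v‖ ^ 2 / 2))) := by
        exact mul_le_mul_of_nonneg_left gstep
          (mul_nonneg (heatKernel_pos ht _).le (Real.exp_nonneg _))
    _ = (heatKernel n t (z - w) * g w)
          * Real.exp (-(θ * σ * (‖(x - y) - (u - v)‖ ^ 2 / (4 * t) + ‖u - v‖ ^ 2 / (2 * κ)))) := by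
        rw [show (-(θ * σ * (‖(x - y) - (u - v)‖ ^ 2 / (4 * t) + ‖u - v‖ ^ 2 / (2 * κ))))
          = -(θ * σ * ‖(x - y) - (u - v)‖ ^ 2) / (4 * t) + -(κ⁻¹ * θ * σ * ‖u - v‖ ^ 2 / 2) by
            field_simp; ring]
        rw [Real.exp_add]; ring
    _ ≤ (heatKernel n t (z - w) * g w) * Real.exp (-(θ * σ * ‖x - y‖ ^ 2 / (2 * (κ + 2 * t)))) := by
        apply mul_le_mul_of_nonneg_left _
          (mul_nonneg (heatKernel_pos ht _).le (hg_nonneg _))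
        apply Real.exp_le_exp.2
        have hq := quad_ineq t κ ht hκ (x - y) (u - v)
        have h2 : θ * σ * ‖x - y‖ ^ 2 / (2 * (κ + 2 * t))
            ≤ θ * σ * (‖x - y - (u - v)‖ ^ 2 / (4 * t) + ‖u - v‖ ^ 2 / (2 * κ)) := by
          calc θ * σ * ‖x - y‖ ^ 2 / (2 * (κ + 2 * t))
              = θ * σ * (‖x - y‖ ^ 2 / (2 * (κ + 2 * t))) := by ring
            _ ≤ _ := mul_le_mul_of_nonneg_left hq (mul_pos hθ hσ).le
        linarith [h2]
    _ = Real.exp (-(θ * σ * ‖x - y‖ ^ 2 / (2 * (κ + 2 * t))))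
          * (heatKernel n t (z - w) * g w) := mul_comm _ _


/-- Heat-kernel convolution of a `κ⁻¹`-uniformly log-concave measure is
`(κ + 2t)⁻¹`-uniformly log-concave: the density of `p_t ∗ μ` can be written as
`exp(-Ũ)` with `Ũ - |x|²/(2(κ + 2t))` convex. -/
theorem heat_convolution_uniformly_log_concave
    (n : ℕ) (t κ : ℝ) (ht : 0 < t) (hκ : 0 < κ)
    (g : Euc n → ℝ) (hg : Measurable g) (hg_nonneg : ∀ x, 0 ≤ g x)
    (mu : Measure (Euc n)) [IsProbabilityMeasure mu]
    (hmu : mu = volume.withDensity fun x => ENNReal.ofReal (g x))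
    (hconc : StronglyLogConcaveFn κ⁻¹ g) :
    ∃ U : Euc n → ℝ,
      (∀ x, (∫ y, heatKernel n t (x - y) ∂mu) = Real.exp (-U x)) ∧
        ConvexOn ℝ Set.univ (fun x => U x - ‖x‖ ^ 2 / (2 * (κ + 2 * t))) := by
  have hp_cont : Continuous (heatKernel n t) := by
    unfold heatKernel
    exact continuous_const.mul (Real.continuous_exp.comp (by continuity))
  have hp_meas : ∀ x : Euc n, Measurable fun y : Euc n => heatKernel n t (x - y) :=
    fun x => (hp_cont.comp (continuous_const.sub continuous_id)).measurable
  have hp_le : ∀ x : Euc n, heatKernel n t x ≤ (4 * Real.pi * t) ^ (-(n : ℝ) / 2) := by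
    intro x
    unfold heatKernel
    have h1 : Real.exp (-‖x‖ ^ 2 / (4 * t)) ≤ 1 := Real.exp_le_one_iff.2 (by
      rw [show -‖x‖ ^ 2 / (4 * t) = -(‖x‖ ^ 2 / (4 * t)) by ring]
      exact neg_nonpos_of_nonneg (by positivity))
    nlinarith [Real.rpow_pos_of_pos (show (0:ℝ) < 4 * Real.pi * t by positivity) (-(n : ℝ) / 2),
      Real.exp_pos (-‖x‖ ^ 2 / (4 * t))]
  set L : Euc n → ℝ≥0∞ := fun x => ∫⁻ y, ENNReal.ofReal (heatKernel n t (x - y) * g y) with hL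
  have hLmu : ∀ x, (∫⁻ y, ENNReal.ofReal (heatKernel n t (x - y)) ∂mu) = L x := by
    intro x
    rw [hmu, lintegral_withDensity_eq_lintegral_mul _ hg.ennreal_ofReal
      (hp_meas x).ennreal_ofReal]
    refine lintegral_congr fun y => ?_
    simp only [Pi.mul_apply]
    rw [← ENNReal.ofReal_mul (hg_nonneg y), mul_comm (g y)]
  have hLtop : ∀ x, L x ≠ ∞ := by
    intro x
    rw [← hLmu x]
    refine ne_top_of_le_ne_top ?_ (lintegral_mono
      (fun y => ENNReal.ofReal_le_ofReal (hp_le (x - y))))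
    rw [lintegral_const, measure_univ, mul_one]
    exact ENNReal.ofReal_ne_top
  have hL0 : ∀ x, L x ≠ 0 := by
    intro x
    rw [← hLmu x]
    rw [← pos_iff_ne_zero, lintegral_pos_iff_support (hp_meas x).ennreal_ofReal]
    have : (Function.support fun y => ENNReal.ofReal (heatKernel n t (x - y))) = univ := by
      ext y
      simp [Function.mem_support, ENNReal.ofReal_eq_zero, not_le, heatKernel_pos ht (x - y)]
    rw [this, measure_univ]
    exact zero_lt_one
  have hint : ∀ x, (∫ y, heatKernel n t (x - y) ∂mu) = (L x).toReal := by
    intro x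
    rw [integral_eq_lintegral_of_nonneg_ae
      (Eventually.of_forall fun y => (heatKernel_pos ht (x - y)).le)
      (hp_meas x).aestronglyMeasurable]
    rw [hLmu x]
  have hLpos : ∀ x, 0 < (L x).toReal := fun x => ENNReal.toReal_pos (hL0 x) (hLtop x)
  refine ⟨fun x => -Real.log ((L x).toReal), fun x => ?_, ?_⟩
  · rw [hint x, neg_neg, Real.exp_log (hLpos x)]
  -- the ENNReal inequality
  have hLkey : ∀ (a b : ℝ), 0 < a → 0 < b → a + b = 1 → ∀ x y : Euc n,
      L x ^ a * L y ^ b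
        ≤ ENNReal.ofReal (Real.exp (-(a * b * ‖x - y‖ ^ 2 / (2 * (κ + 2 * t)))))
          * L (a • x + b • y) := by
    intro a b ha hb hab x y
    set K := Real.exp (-(a * b * ‖x - y‖ ^ 2 / (2 * (κ + 2 * t)))) with hK
    have hKpos : 0 < K := Real.exp_pos _
    have hmeasf : Measurable fun u => ENNReal.ofReal (heatKernel n t (x - u) * g u) :=
      ((hp_meas x).mul hg).ennreal_ofReal
    have hmeasg : Measurable fun v => ENNReal.ofReal (heatKernel n t (y - v) * g v) :=
      ((hp_meas y).mul hg).ennreal_ofReal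
    have hmeash : Measurable fun w =>
        ENNReal.ofReal K * ENNReal.ofReal (heatKernel n t ((a • x + b • y) - w) * g w) :=
      (((hp_meas (a • x + b • y)).mul hg).ennreal_ofReal).const_mul _
    have hpl := pl_euc n ha hb hab
      (fun u => ENNReal.ofReal (heatKernel n t (x - u) * g u))
      (fun v => ENNReal.ofReal (heatKernel n t (y - v) * g v))
      (fun w => ENNReal.ofReal K * ENNReal.ofReal (heatKernel n t ((a • x + b • y) - w) * g w))
      hmeasf hmeasg hmeash ?_
    · calc L x ^ a * L y ^ b ≤ _ := hpl
        _ = ENNReal.ofReal K * L (a • x + b • y) := by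
          rw [lintegral_const_mul (ENNReal.ofReal K) (f := fun w => ENNReal.ofReal (heatKernel n t ((a • x + b • y) - w) * g w)) (((hp_meas (a • x + b • y)).mul hg).ennreal_ofReal)]
    · intro u v
      show ENNReal.ofReal (heatKernel n t (x - u) * g u) ^ a
          * ENNReal.ofReal (heatKernel n t (y - v) * g v) ^ b
        ≤ ENNReal.ofReal K
          * ENNReal.ofReal (heatKernel n t (a • x + b • y - (a • u + b • v)) * g (a • u + b • v))
      rw [ENNReal.ofReal_rpow_of_nonneg (mul_nonneg (heatKernel_pos ht _).le (hg_nonneg u)) ha.le,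
        ENNReal.ofReal_rpow_of_nonneg (mul_nonneg (heatKernel_pos ht _).le (hg_nonneg v)) hb.le,
        ← ENNReal.ofReal_mul (Real.rpow_nonneg (mul_nonneg (heatKernel_pos ht _).le (hg_nonneg u)) a), ← ENNReal.ofReal_mul hKpos.le]
      exact ENNReal.ofReal_le_ofReal
        (pointwise_key n t κ a b ht hκ ha hb hab g hg_nonneg hconc x y u v)
  -- convexity
  refine ⟨convex_univ, ?_⟩
  intro x _ y _ a b ha hb hab
  rcases eq_or_lt_of_le ha with ha0 | ha0
  · have hb1 : b = 1 := by linarith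
    simp [← ha0, hb1]
  rcases eq_or_lt_of_le hb with hb0 | hb0
  · have ha1 : a = 1 := by linarith
    simp [← hb0, ha1]
  -- now 0 < a, 0 < b
  have hkey := hLkey a b ha0 hb0 hab x y
  set z := a • x + b • y with hz
  -- convert to reals
  set K := Real.exp (-(a * b * ‖x - y‖ ^ 2 / (2 * (κ + 2 * t)))) with hK
  have hKpos : 0 < K := Real.exp_pos _
  have hfin : ENNReal.ofReal K * L z ≠ ∞ := ENNReal.mul_ne_top ENNReal.ofReal_ne_top (hLtop z)
  have hreal : (L x).toReal ^ a * (L y).toReal ^ b ≤ K * (L z).toReal := by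
    have h1 := ENNReal.toReal_mono hfin hkey
    rw [ENNReal.toReal_mul, ENNReal.toReal_mul, ENNReal.toReal_ofReal (Real.exp_pos _).le,
      ← ENNReal.toReal_rpow, ← ENNReal.toReal_rpow] at h1
    exact h1
  -- take logs
  have hlog : -Real.log ((L z).toReal)
      ≤ a * (-Real.log ((L x).toReal)) + b * (-Real.log ((L y).toReal))
        + (-( a * b * ‖x - y‖ ^ 2 / (2 * (κ + 2 * t)))) := by
    have h2 : Real.log ((L x).toReal ^ a * (L y).toReal ^ b) ≤ Real.log (K * (L z).toReal) :=
      Real.log_le_log (mul_pos (Real.rpow_pos_of_pos (hLpos x) a)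
        (Real.rpow_pos_of_pos (hLpos y) b)) hreal
    rw [Real.log_mul (Real.rpow_pos_of_pos (hLpos x) a).ne'
      (Real.rpow_pos_of_pos (hLpos y) b).ne', Real.log_mul hKpos.ne'
      (hLpos z).ne', Real.log_rpow (hLpos x), Real.log_rpow (hLpos y), hK,
      Real.log_exp] at h2
    linarith
  have hnorm := norm_combo a b hab x y
  simp only [smul_eq_mul]
  rw [hz] at *
  have hgoal : -Real.log ((L (a • x + b • y)).toReal) - ‖a • x + b • y‖ ^ 2 / (2 * (κ + 2 * t))
      ≤ a * (-Real.log ((L x).toReal) - ‖x‖ ^ 2 / (2 * (κ + 2 * t)))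
        + b * (-Real.log ((L y).toReal) - ‖y‖ ^ 2 / (2 * (κ + 2 * t))) := by
    have hpos : (0:ℝ) < 2 * (κ + 2 * t) := by positivity
    rw [hnorm]
    have expand : (a * ‖x‖ ^ 2 + b * ‖y‖ ^ 2 - a * b * ‖x - y‖ ^ 2) / (2 * (κ + 2 * t))
        = a * (‖x‖ ^ 2 / (2 * (κ + 2 * t))) + b * (‖y‖ ^ 2 / (2 * (κ + 2 * t)))
          - a * b * ‖x - y‖ ^ 2 / (2 * (κ + 2 * t)) := by ring
    rw [expand]
    linarith
  exact hgoal
end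
end
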